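/- arXiv:2208.03803 — 7 statements merged into one kernel-verified Lean document; each statement's English description precedes it below -/
import Mathlib

section
/- Let F be a union-closed family of subsets of [n] with union equal to [n], let x ∈ [n], and let A ∈ F with x ∈ A. Then the number of sets in F containing x is at least (1/(2^(|A|-1)+1)) · |F|. -/
theorem stmt_0 (n : ℕ) (F : Finset (Finset (Fin n)))
    (hUC : ∀ A ∈ F, ∀ B ∈ F, A ∪ B ∈ F)
    (hNT : F.sup id = (Finset.univ : Finset (Fin n)))
    (x : Fin n) (A : Finset (Fin n)) (hA : A ∈ F) (hxA : x ∈ A) :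
    ((F.filter (fun S => x ∈ S)).card : ℝ) ≥ (1 / (2 ^ (A.card - 1) + 1)) * F.card := by
  classical
  set k := A.card - 1 with hk
  set Fx := F.filter (fun S => x ∈ S) with hFx
  set Fc := F.filter (fun S => x ∉ S) with hFc
  have hsplit : Fx.card + Fc.card = F.card :=
    Finset.card_filter_add_card_filter_not (fun S => x ∈ S)
  have hbound : Fc.card ≤ 2 ^ k * Fx.card := by
    apply Finset.card_le_mul_card_image_of_maps_to (f := fun S => S ∪ A)
    · intro S hS
      simp only [hFc, Finset.mem_filter] at hS
      simp only [hFx, Finset.mem_filter]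
      exact ⟨hUC _ hS.1 _ hA, Finset.mem_union.2 (Or.inr hxA)⟩
    · intro T hT
      have hA_erase : (A.erase x).card = k := by
        rw [Finset.card_erase_of_mem hxA, hk]
      calc (Fc.filter (fun S => S ∪ A = T)).card
          ≤ (A.erase x).powerset.card := by
            apply Finset.card_le_card_of_injOn (fun S => S ∩ (A.erase x))
            · intro S _
              exact Finset.mem_powerset.2 Finset.inter_subset_right
            · intro S1 h1 S2 h2 heq
              simp only [Finset.coe_filter, Set.mem_setOf_eq, hFc,
                Finset.mem_filter] at h1 h2
              ext a
              by_cases haA : a ∈ A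
              · by_cases hax : a = x
                · subst hax
                  simp [h1.1.2, h2.1.2]
                · have hae : a ∈ A.erase x := Finset.mem_erase.2 ⟨hax, haA⟩
                  have := Finset.ext_iff.1 heq a
                  simp only [Finset.mem_inter, hae, and_true] at this
                  exact this
              · have hu : a ∈ S1 ∪ A ↔ a ∈ S2 ∪ A := by rw [h1.2, h2.2]
                simpa [Finset.mem_union, haA] using hu
        _ = 2 ^ k := by rw [Finset.card_powerset, hA_erase]
  -- now arithmetic
  have hF : F.card ≤ (2 ^ k + 1) * Fx.card := by
    calc F.card = Fx.card + Fc.card := hsplit.symm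
      _ ≤ Fx.card + 2 ^ k * Fx.card := by omega
      _ = (2 ^ k + 1) * Fx.card := by ring
  have hpos : (0 : ℝ) < 2 ^ k + 1 := by positivity
  rw [ge_iff_le, one_div, inv_mul_le_iff₀ hpos]
  calc (F.card : ℝ) ≤ ((2 ^ k + 1) * Fx.card : ℕ) := by exact_mod_cast hF
    _ = (2 ^ k + 1) * Fx.card := by push_cast; ring
end

section
/- Let F be a nontrivial union-closed separating family of subsets of [n] with n ≥ 2, and let x, y ∈ [n] be two distinct elements such that the number of sets of F containing x is at least the number containing y. Then x is contained in at least (1/(2^(n-2)+1))·|F| sets of F. -/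
/-!
At most `2 ^ (n - 1)` members of `F` avoid `x`, since they are subsets of `[n] \ {x}`. On the other
hand at least two members contain `x`: if `A` were the only one, then `A ∪ B = A` for every
`B ∋ y`, so every set containing `x` would contain `y`, and since `y` is no more frequent than `x`,
`x` and `y` would not be separated. Hence `|F| ≤ |F_x| + 2 ^ (n - 1) ≤ |F_x| (2 ^ (n - 2) + 1)`.
-/

open Finset

section UnionClosed

variable {α : Type*} [DecidableEq α]

theorem filter_mem_subset_filter_mem_of_card_le_one {F : Finset (Finset α)}
    (hUC : ∀ A ∈ F, ∀ B ∈ F, A ∪ B ∈ F) {x y : α}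
    (hx : #(F.filter (x ∈ ·)) ≤ 1) (hy : (F.filter (y ∈ ·)).Nonempty) :
    F.filter (x ∈ ·) ⊆ F.filter (y ∈ ·) := by
  obtain ⟨B, hB⟩ := hy
  rw [mem_filter] at hB
  intro A hA
  rw [mem_filter] at hA ⊢
  have hAB : A ∪ B ∈ F.filter (x ∈ ·) :=
    mem_filter.2 ⟨hUC A hA.1 B hB.1, mem_union_left B hA.2⟩
  have hAB_eq : A ∪ B = A := card_le_one.1 hx _ hAB A (mem_filter.2 hA)
  exact ⟨hA.1, hAB_eq ▸ mem_union_right A hB.2⟩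

theorem one_lt_card_filter_mem {F : Finset (Finset α)}
    (hUC : ∀ A ∈ F, ∀ B ∈ F, A ∪ B ∈ F) {x y : α}
    (hsep : F.filter (x ∈ ·) ≠ F.filter (y ∈ ·)) (hy : (F.filter (y ∈ ·)).Nonempty)
    (hfreq : #(F.filter (y ∈ ·)) ≤ #(F.filter (x ∈ ·))) :
    1 < #(F.filter (x ∈ ·)) := by
  by_contra! hx
  exact hsep <| eq_of_subset_of_card_le
    (filter_mem_subset_filter_mem_of_card_le_one hUC hx hy) hfreq

variable [Fintype α]

theorem card_filter_notMem_le_two_pow (F : Finset (Finset α)) (x : α) :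
    #(F.filter (x ∉ ·)) ≤ 2 ^ (Fintype.card α - 1) := by
  calc #(F.filter (x ∉ ·))
      ≤ #({x}ᶜ : Finset α).powerset := by
        refine card_le_card fun S hS => mem_powerset.2 fun a ha => ?_
        rw [mem_compl, mem_singleton]
        rintro rfl
        exact (mem_filter.1 hS).2 ha
    _ = 2 ^ (Fintype.card α - 1) := by
        rw [card_powerset, card_compl, card_singleton]

theorem card_le_card_filter_mem_mul (F : Finset (Finset α)) (x : α)
    (hx : 2 ≤ #(F.filter (x ∈ ·))) :
    #F ≤ #(F.filter (x ∈ ·)) * (2 ^ (Fintype.card α - 2) + 1) := by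
  have hpow : 2 ^ (Fintype.card α - 1) ≤ 2 * 2 ^ (Fintype.card α - 2) := by
    rw [← pow_succ']
    exact Nat.pow_le_pow_right two_pos (by omega)
  calc #F = #(F.filter (x ∈ ·)) + #(F.filter (x ∉ ·)) :=
        (card_filter_add_card_filter_not _).symm
    _ ≤ #(F.filter (x ∈ ·)) + 2 * 2 ^ (Fintype.card α - 2) := by
        have := card_filter_notMem_le_two_pow F x
        omega
    _ ≤ #(F.filter (x ∈ ·)) * (2 ^ (Fintype.card α - 2) + 1) := by
        have := Nat.mul_le_mul_right (2 ^ (Fintype.card α - 2)) hx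
        linarith

end UnionClosed

theorem stmt_2_general (n : ℕ) (F : Finset (Finset (Fin n)))
    (hUC : ∀ A ∈ F, ∀ B ∈ F, A ∪ B ∈ F)
    (hNT : F.sup id = (Finset.univ : Finset (Fin n)))
    (hSep : ∀ x y : Fin n, x ≠ y →
      F.filter (fun S => x ∈ S) ≠ F.filter (fun S => y ∈ S))
    (x y : Fin n) (hxy : x ≠ y)
    (hfreq : (F.filter (fun S => y ∈ S)).card ≤ (F.filter (fun S => x ∈ S)).card) :
    ((F.filter (fun S => x ∈ S)).card : ℝ) ≥ (1 / (2 ^ (n - 2) + 1)) * F.card := by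
  have hy : (F.filter (y ∈ ·)).Nonempty := by
    obtain ⟨B, hB, hyB⟩ := mem_sup.1 (hNT ▸ mem_univ y)
    exact ⟨B, mem_filter.2 ⟨hB, hyB⟩⟩
  have hcard := card_le_card_filter_mem_mul F x
    (one_lt_card_filter_mem hUC (hSep x y hxy) hy hfreq)
  rw [Fintype.card_fin] at hcard
  rw [ge_iff_le, one_div_mul_eq_div, div_le_iff₀ (by positivity)]
  exact_mod_cast hcard

theorem stmt_2 (n : ℕ) (hn : 2 ≤ n) (F : Finset (Finset (Fin n)))
    (hUC : ∀ A ∈ F, ∀ B ∈ F, A ∪ B ∈ F)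
    (hNT : F.sup id = (Finset.univ : Finset (Fin n)))
    (hSep : ∀ x y : Fin n, x ≠ y →
      F.filter (fun S => x ∈ S) ≠ F.filter (fun S => y ∈ S))
    (x y : Fin n) (hxy : x ≠ y)
    (hfreq : (F.filter (fun S => y ∈ S)).card ≤ (F.filter (fun S => x ∈ S)).card) :
    ((F.filter (fun S => x ∈ S)).card : ℝ) ≥ (1 / (2 ^ (n - 2) + 1)) * F.card :=
  stmt_2_general n F hUC hNT hSep x y hxy hfreq
end

section
/- An equivalence relation γ on P([n]) is of the form X γ Y ⟺ τ(X) = τ(Y) for some interior operator τ on P([n]) if and only if for all A, B, C ⊆ [n]: A γ B implies (A ∩ C) γ (B ∩ C). -/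
theorem stmt_7 (n : ℕ) (γ : Finset (Fin n) → Finset (Fin n) → Prop)
    (hEquiv : Equivalence γ) :
    (∃ τ : Finset (Fin n) → Finset (Fin n),
      (∀ X, τ X ⊆ X) ∧ (∀ X Y, X ⊆ Y → τ X ⊆ τ Y) ∧ (∀ X, τ (τ X) = τ X) ∧
      (∀ X Y, γ X Y ↔ τ X = τ Y)) ↔
    (∀ A B C : Finset (Fin n), γ A B → γ (A ∩ C) (B ∩ C)) := by
  classical
  constructor
  · rintro ⟨τ, hsub, hmono, hidem, hiff⟩ A B C hAB
    have key : ∀ X C : Finset (Fin n), τ (X ∩ C) = τ (τ X ∩ C) := by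
      intro X C
      apply Finset.Subset.antisymm
      · have h1 : τ (X ∩ C) ⊆ τ X ∩ C :=
          Finset.subset_inter (hmono _ _ Finset.inter_subset_left)
            ((hsub _).trans Finset.inter_subset_right)
        calc τ (X ∩ C) = τ (τ (X ∩ C)) := (hidem _).symm
          _ ⊆ τ (τ X ∩ C) := hmono _ _ h1
      · exact hmono _ _ (Finset.inter_subset_inter (hsub X) Finset.Subset.rfl)
    rw [hiff] at hAB ⊢
    rw [key A C, key B C, hAB]
  · intro hInt
    -- class of X as a finset
    set S : Finset (Fin n) → Finset (Finset (Fin n)) :=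
      fun X => Finset.univ.filter (fun Y => γ X Y) with hS
    have hXS : ∀ X, X ∈ S X := by
      intro X; simp [hS, hEquiv.refl X]
    have hne : ∀ X, (S X).Nonempty := fun X => ⟨X, hXS X⟩
    set τ : Finset (Fin n) → Finset (Fin n) :=
      fun X => (S X).inf' (hne X) id with hτ
    have hmemS : ∀ X Y, Y ∈ S X ↔ γ X Y := by
      intro X Y; simp [hS]
    -- class closed under intersection
    have hclosed : ∀ X, ∀ Y ∈ {Z | γ X Z}, ∀ Z ∈ {Z | γ X Z}, Y ⊓ Z ∈ {Z | γ X Z} := by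
      intro X Y hY Z hZ
      simp only [Set.mem_setOf_eq] at *
      have h1 : γ Y Z := hEquiv.trans (hEquiv.symm hY) hZ
      have h2 : γ (Y ∩ Y) (Z ∩ Y) := hInt _ _ _ h1
      rw [Finset.inter_self] at h2
      have : γ X (Z ∩ Y) := hEquiv.trans hY h2
      rwa [Finset.inter_comm] at this
    have hγτ : ∀ X, γ X (τ X) := by
      intro X
      have := Finset.inf'_mem ({Z | γ X Z}) (hclosed X) (S X) (hne X) id
        (fun Y hY => (hmemS X Y).mp hY)
      exact this
    have hle : ∀ X Y, γ X Y → τ X ⊆ τ Y := by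
      intro X Y h
      have : τ X ≤ τ Y := Finset.le_inf' _ _ (fun Z hZ =>
        Finset.inf'_le id ((hmemS X Z).mpr (hEquiv.trans h ((hmemS Y Z).mp hZ))))
      exact this
    have heq : ∀ X Y, γ X Y → τ X = τ Y := fun X Y h =>
      Finset.Subset.antisymm (hle X Y h) (hle Y X (hEquiv.symm h))
    refine ⟨τ, ?_, ?_, ?_, ?_⟩
    · intro X
      exact Finset.inf'_le id (hXS X)
    · intro X Y hXY
      have h1 : γ X (τ Y ∩ X) := by
        have := hInt Y (τ Y) X (hγτ Y)
        rw [Finset.inter_eq_right.mpr hXY] at this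
        exact this
      have : τ X ⊆ τ Y ∩ X := Finset.inf'_le id ((hmemS X _).mpr h1)
      exact this.trans Finset.inter_subset_left
    · intro X
      exact (heq X (τ X) (hγτ X)).symm
    · intro X Y
      constructor
      · exact heq X Y
      · intro h
        exact hEquiv.trans (hγτ X) (h ▸ hEquiv.symm (hγτ Y))
end

section
/- Let F ⊆ P([n]) be union closed with ∅ ∈ F, let τ(X) = ⋃{G ∈ F : G ⊆ X}, and for F ∈ F let T(F) = τ⁻¹({F}). If E, F ∈ F with E ⊆ F, then the map ι : T(F) → T(E) given by ι(X) = X \ (F \ E) is a well-defined order embedding (X ⊆ Y iff ι(X) ⊆ ι(Y)); in particular |T(F)| ≤ |T(E)|. -/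
/-!
`τ X` is the union of the members of `ℱ` contained in `X`, so `τ` is deflationary and monotone,
and `E ⊆ τ Z` whenever `E ∈ ℱ` lies in `Z`. If `τ X = F` and `Z = X \ (F \ E)`, then `E ⊆ Z`
gives `E ⊆ τ Z`, while `τ Z ⊆ τ X \ (F \ E) = E`. Every `X` in the fiber over `F` contains
`F \ E`, so removing it reflects inclusion.
-/

theorem sdiff_le_sdiff_iff_of_le {β : Type*} [GeneralizedBooleanAlgebra β] {x y d : β}
    (hd : d ≤ y) : x \ d ≤ y \ d ↔ x ≤ y := by
  rw [le_sdiff, sdiff_le_iff, sup_eq_right.2 hd]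
  exact and_iff_left disjoint_sdiff_self_left

namespace Finset

variable {α : Type*} [DecidableEq α]

def familyInterior (ℱ : Finset (Finset α)) (X : Finset α) : Finset α :=
  (ℱ.filter (· ⊆ X)).sup id

variable {ℱ : Finset (Finset α)}

theorem familyInterior_subset (X : Finset α) : familyInterior ℱ X ⊆ X :=
  Finset.sup_le fun _ hG ↦ (mem_filter.1 hG).2

theorem subset_familyInterior {G X : Finset α} (hG : G ∈ ℱ) (hGX : G ⊆ X) :
    G ⊆ familyInterior ℱ X :=
  le_sup (f := id) (mem_filter.2 ⟨hG, hGX⟩)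

theorem familyInterior_mono : Monotone (familyInterior ℱ) := fun _ _ hXY ↦
  sup_mono fun _ hG ↦ mem_filter.2 ⟨(mem_filter.1 hG).1, (mem_filter.1 hG).2.trans hXY⟩

theorem subset_of_familyInterior_eq {X F : Finset α} (hX : familyInterior ℱ X = F) : F ⊆ X :=
  hX ▸ familyInterior_subset X

theorem familyInterior_sdiff_sdiff {X E F : Finset α} (hE : E ∈ ℱ) (hEF : E ⊆ F)
    (hX : familyInterior ℱ X = F) : familyInterior ℱ (X \ (F \ E)) = E := by
  have hFX := subset_of_familyInterior_eq hX
  set Z := X \ (F \ E)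
  apply Subset.antisymm
  · have hZF : familyInterior ℱ Z ⊆ F := hX ▸ familyInterior_mono sdiff_subset
    have hZ : Disjoint (familyInterior ℱ Z) (F \ E) :=
      disjoint_sdiff_self_left.mono_left (familyInterior_subset Z)
    simpa only [sdiff_sdiff_eq_self hEF] using subset_sdiff.2 ⟨hZF, hZ⟩
  · exact subset_familyInterior hE (subset_sdiff.2 ⟨hEF.trans hFX, disjoint_sdiff⟩)

theorem sdiff_sdiff_subset_iff_of_familyInterior_eq {X Y E F : Finset α}
    (hY : familyInterior ℱ Y = F) : X \ (F \ E) ⊆ Y \ (F \ E) ↔ X ⊆ Y :=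
  sdiff_le_sdiff_iff_of_le (sdiff_subset.trans (subset_of_familyInterior_eq hY))

theorem card_familyInterior_fiber_le [Fintype α] {E F : Finset α} (hE : E ∈ ℱ) (hEF : E ⊆ F) :
    #{X | familyInterior ℱ X = F} ≤ #{X | familyInterior ℱ X = E} := by
  refine card_le_card_of_injOn (· \ (F \ E)) (fun X hX ↦ ?_) fun X hX Y hY hXY ↦ ?_
  · simp only [coe_filter, mem_univ, true_and, Set.mem_ofPred_eq] at hX ⊢
    exact familyInterior_sdiff_sdiff hE hEF hX
  · simp only [coe_filter, mem_univ, true_and, Set.mem_ofPred_eq] at hX hY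
    exact Subset.antisymm ((sdiff_sdiff_subset_iff_of_familyInterior_eq hY).1 hXY.le)
      ((sdiff_sdiff_subset_iff_of_familyInterior_eq hX).1 hXY.ge)

end Finset

theorem stmt_9_general (n : ℕ) (ℱ : Finset (Finset (Fin n)))
    (τ : Finset (Fin n) → Finset (Fin n))
    (hτ : ∀ X, τ X = (ℱ.filter (fun G => G ⊆ X)).sup id)
    (E F : Finset (Fin n)) (hE : E ∈ ℱ) (hEF : E ⊆ F) :
    (∀ X, τ X = F → τ (X \ (F \ E)) = E) ∧
    (∀ X Y, τ X = F → τ Y = F → (X ⊆ Y ↔ X \ (F \ E) ⊆ Y \ (F \ E))) ∧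
    (Finset.univ.filter (fun X : Finset (Fin n) => τ X = F)).card
      ≤ (Finset.univ.filter (fun X : Finset (Fin n) => τ X = E)).card := by
  obtain rfl : τ = Finset.familyInterior ℱ := funext hτ
  exact ⟨fun X ↦ Finset.familyInterior_sdiff_sdiff hE hEF,
    fun X Y _ hY ↦ (Finset.sdiff_sdiff_subset_iff_of_familyInterior_eq hY).symm,
    Finset.card_familyInterior_fiber_le hE hEF⟩

theorem stmt_9 (n : ℕ) (ℱ : Finset (Finset (Fin n)))
    (hEmpty : ∅ ∈ ℱ) (hUC : ∀ A ∈ ℱ, ∀ B ∈ ℱ, A ∪ B ∈ ℱ)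
    (τ : Finset (Fin n) → Finset (Fin n))
    (hτ : ∀ X, τ X = (ℱ.filter (fun G => G ⊆ X)).sup id)
    (E F : Finset (Fin n)) (hE : E ∈ ℱ) (hF : F ∈ ℱ) (hEF : E ⊆ F) :
    (∀ X, τ X = F → τ (X \ (F \ E)) = E) ∧
    (∀ X Y, τ X = F → τ Y = F → (X ⊆ Y ↔ X \ (F \ E) ⊆ Y \ (F \ E))) ∧
    (Finset.univ.filter (fun X : Finset (Fin n) => τ X = F)).card
      ≤ (Finset.univ.filter (fun X : Finset (Fin n) => τ X = E)).card :=
  stmt_9_general n ℱ τ hτ E F hE hEF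
end

section
/- Let n ≥ 2 and let U ⊆ P([n]) be an up-set with |U| ≤ 2^(n-1). Let C = 1 + e^{-1} and let t be an integer with t ≥ Cn/log₂ n. Then among any sets A₁, ..., A_t ∈ U there exist indices i < j with A_i ∩ A_j ≠ ∅. -/
/-!
Suppose `A₁, …, A_t ∈ U` were pairwise disjoint. A set containing some `A_i` lies in the
up-set `U`, so at least `2ⁿ - |U| ≥ 2ⁿ⁻¹` sets contain no `A_i`. By disjointness the events
`A_i ⊆ S` are independent for a uniformly random `S`, so this proportion is
`∏ (1 - 2^{-|A_i|}) < exp (-∑ 2^{-|A_i|})`. Since `∑ |A_i| ≤ n`, convexity gives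
`∑ 2^{-|A_i|} ≥ t 2^{-n/t}`, and the bound on `t` makes this at least `log 2`: the proportion
would be below `1/2`.
-/

open Finset Real

section Counting

variable {α ι : Type*} [DecidableEq α]

theorem card_filter_powerset_inter_sdiff {A V : Finset α} (hAV : A ⊆ V)
    (p q : Finset α → Prop) [DecidablePred p] [DecidablePred q] :
    #{S ∈ V.powerset | p (S ∩ A) ∧ q (S \ A)} =
      #{T ∈ A.powerset | p T} * #{R ∈ (V \ A).powerset | q R} := by
  have split : ∀ T R : Finset α, T ⊆ A → Disjoint R A →
      (T ∪ R) ∩ A = T ∧ (T ∪ R) \ A = R :=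
    fun T R hT hRA => ⟨by grind [disjoint_left], by grind [disjoint_left]⟩
  rw [← card_product, ← filter_product]
  refine card_nbij' (fun S => (S ∩ A, S \ A)) (fun x => x.1 ∪ x.2) ?_ ?_ ?_ ?_
  · intro S hS
    simp only [coe_filter, mem_powerset, Set.mem_ofPred_eq, mem_product] at hS ⊢
    exact ⟨⟨inter_subset_right, sdiff_subset_sdiff hS.1 le_rfl⟩, hS.2⟩
  · rintro ⟨T, R⟩ h
    simp only [coe_filter, mem_powerset, Set.mem_ofPred_eq, mem_product, subset_sdiff] at h
    obtain ⟨⟨hT, hR⟩, hpq⟩ := h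
    obtain ⟨hTR, hTR'⟩ := split T R hT hR.2
    simp only [coe_filter, mem_powerset, Set.mem_ofPred_eq, hTR, hTR']
    exact ⟨union_subset (hT.trans hAV) hR.1, hpq⟩
  · intro S _
    exact sup_inf_sdiff S A
  · rintro ⟨T, R⟩ h
    simp only [coe_filter, mem_powerset, Set.mem_ofPred_eq, mem_product, subset_sdiff] at h
    obtain ⟨⟨hT, hR⟩, -⟩ := h
    obtain ⟨hTR, hTR'⟩ := split T R hT hR.2
    simp [hTR, hTR']

theorem card_filter_powerset_forall_not_subset {s : Finset ι} {A : ι → Finset α}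
    {V : Finset α} (hAV : ∀ i ∈ s, A i ⊆ V) (hA : (s : Set ι).PairwiseDisjoint A) :
    (#{S ∈ V.powerset | ∀ i ∈ s, ¬ A i ⊆ S} : ℝ) =
      2 ^ #V * ∏ i ∈ s, (1 - (2 ^ #(A i))⁻¹) := by
  classical
  induction s using Finset.induction_on generalizing V with
  | empty => simp
  | @insert j s hj ih =>
    have hjV : A j ⊆ V := hAV j (mem_insert_self j s)
    have hdisj : ∀ i ∈ s, Disjoint (A i) (A j) := fun i hi =>
      hA (by simp [hi]) (by simp) (ne_of_mem_of_not_mem hi hj)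
    have hsplit : ∀ S, (∀ i ∈ insert j s, ¬ A i ⊆ S) ↔
        S ∩ A j ≠ A j ∧ ∀ i ∈ s, ¬ A i ⊆ S \ A j := by
      intro S
      simp +contextual [inter_eq_right, subset_sdiff, hdisj]
    have hcard : (2 : ℝ) ^ #V = 2 ^ #(V \ A j) * 2 ^ #(A j) := by
      rw [← pow_add, card_sdiff_add_card_eq_card hjV]
    rw [filter_congr fun S _ => hsplit S,
      card_filter_powerset_inter_sdiff hjV (· ≠ A j) (fun R => ∀ i ∈ s, ¬ A i ⊆ R),
      filter_ne', card_erase_of_mem (mem_powerset_self _), card_powerset, Nat.cast_mul,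
      Nat.cast_sub Nat.one_le_two_pow,
      ih (fun i hi => subset_sdiff.2 ⟨hAV i (mem_insert_of_mem hi), hdisj i hi⟩)
        (hA.subset (by simp)), prod_insert hj, hcard]
    push_cast
    field_simp

theorem one_half_le_prod_one_sub_inv_two_pow_card [Fintype α] [Nonempty α]
    {U : Finset (Finset α)} (hU : IsUpperSet (U : Set (Finset α)))
    (hcard : #U ≤ 2 ^ (Fintype.card α - 1)) {s : Finset ι} {A : ι → Finset α}
    (hA : ∀ i ∈ s, A i ∈ U) (hdisj : (s : Set ι).PairwiseDisjoint A) :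
    1 / 2 ≤ ∏ i ∈ s, (1 - ((2 : ℝ) ^ #(A i))⁻¹) := by
  set N := #{S ∈ (univ : Finset α).powerset | ∀ i ∈ s, ¬ A i ⊆ S} with hN
  have hcompl : #Uᶜ ≤ N := card_le_card fun S hS => mem_filter.2
    ⟨mem_powerset.2 (subset_univ S), fun i hi hAS => mem_compl.1 hS (hU hAS (hA i hi))⟩
  have htwo : 2 ^ Fintype.card α = 2 * 2 ^ (Fintype.card α - 1) := by
    rw [← pow_succ', Nat.sub_add_cancel (Fintype.card_pos (α := α))]
  have hcount : (2 : ℝ) ^ (Fintype.card α - 1) ≤ N := by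
    rw [card_compl, Fintype.card_finset] at hcompl
    exact_mod_cast (show 2 ^ (Fintype.card α - 1) ≤ N by omega)
  rw [hN, card_filter_powerset_forall_not_subset (fun i _ => subset_univ (A i)) hdisj,
    card_univ, show (2 : ℝ) ^ Fintype.card α = 2 * 2 ^ (Fintype.card α - 1) by
      exact_mod_cast htwo] at hcount
  nlinarith [pow_pos (two_pos (α := ℝ)) (Fintype.card α - 1)]

end Counting

section Estimates

variable {ι : Type*}

theorem prod_one_sub_lt_exp_neg_sum {s : Finset ι} (hs : s.Nonempty) {x : ι → ℝ}
    (hx : ∀ i ∈ s, x i ∈ Set.Ioo 0 1) : ∏ i ∈ s, (1 - x i) < exp (-∑ i ∈ s, x i) := by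
  rw [← sum_neg_distrib, exp_sum]
  exact prod_lt_prod_of_nonempty (fun i hi => sub_pos.2 (hx i hi).2)
    (fun i hi => one_sub_lt_exp_neg (hx i hi).1.ne') hs

theorem card_mul_exp_sum_div_card_le_sum_exp {s : Finset ι} (hs : s.Nonempty) (y : ι → ℝ) :
    #s * exp ((∑ i ∈ s, y i) / #s) ≤ ∑ i ∈ s, exp (y i) := by
  have hcard : (0 : ℝ) < #s := by exact_mod_cast hs.card_pos
  have jensen := convexOn_exp.map_sum_le (t := s) (w := fun _ => (#s : ℝ)⁻¹) (p := y)
    (fun _ _ => by positivity) (by simp [hcard.ne']) (fun _ _ => Set.mem_univ _)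
  simp only [smul_eq_mul, ← mul_sum] at jensen
  rw [div_eq_inv_mul]
  calc #s * exp ((#s : ℝ)⁻¹ * ∑ i ∈ s, y i)
      ≤ #s * ((#s : ℝ)⁻¹ * ∑ i ∈ s, exp (y i)) := by gcongr
    _ = ∑ i ∈ s, exp (y i) := by field_simp

/-- The constant `C = 1 + e⁻¹` is the one for which `e (m - m / C) = m / C`, so that
`e y ≤ exp y` at `y = m - m / C` closes the estimate. -/
theorem mul_exp_le_exp_of_le_div {u m : ℝ} (hu : 0 ≤ u) (hum : u ≤ m / (1 + exp (-1))) :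
    u * exp u ≤ exp m := by
  set C := 1 + exp (-1)
  have hC : 0 < C := by positivity
  have key : exp 1 * (m - m / C) = m / C := by
    have : exp 1 * exp (-1) = 1 := by rw [← exp_add]; simp
    field_simp
    linear_combination m * this
  calc u * exp u ≤ m / C * exp (m / C) :=
        mul_le_mul hum (exp_le_exp.2 hum) (exp_pos _).le (hu.trans hum)
    _ ≤ exp (m - m / C) * exp (m / C) := by
        gcongr
        exact key.symm.trans_le exp_one_mul_le_exp
    _ = exp m := by rw [← exp_add, sub_add_cancel]

theorem log_two_le_mul_exp_neg {n t : ℝ} (hn : 1 < n)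
    (ht : (1 + exp (-1)) * n / logb 2 n ≤ t) : log 2 ≤ t * exp (-(n * log 2 / t)) := by
  have hlog2 : 0 < log 2 := log_pos one_lt_two
  have hlogn : 0 < log n := log_pos hn
  have hn0 : 0 < n := one_pos.trans hn
  have ht' : (1 + exp (-1)) * n * log 2 / log n ≤ t := by
    rwa [logb, div_div_eq_mul_div] at ht
  have ht0 : 0 < t := lt_of_lt_of_le (by positivity) ht'
  set u := n * log 2 / t with hu_def
  have hu : 0 < u := by positivity
  have hum : u ≤ log n / (1 + exp (-1)) := by
    rw [hu_def, div_le_iff₀ ht0]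
    rw [div_le_iff₀ hlogn] at ht'
    rw [div_mul_eq_mul_div, le_div_iff₀ (by positivity)]
    linarith
  have hue : u * exp u ≤ n := exp_log hn0 ▸ mul_exp_le_exp_of_le_div hu.le hum
  have htu : t * u = n * log 2 := by rw [hu_def]; field_simp
  rw [exp_neg, ← div_eq_mul_inv, le_div_iff₀ (exp_pos u)]
  nlinarith [exp_pos u]

theorem log_two_le_sum_inv_two_pow {s : Finset ι} (hs : s.Nonempty) (a : ι → ℕ) {n : ℝ}
    (hn : 1 < n) (ha : ∑ i ∈ s, (a i : ℝ) ≤ n)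
    (hs_card : (1 + exp (-1)) * n / logb 2 n ≤ #s) :
    log 2 ≤ ∑ i ∈ s, ((2 : ℝ) ^ a i)⁻¹ := by
  have hpow : ∀ i, ((2 : ℝ) ^ a i)⁻¹ = exp (-(a i * log 2)) := fun i => by
    rw [exp_neg, exp_nat_mul, exp_log two_pos]
  calc log 2 ≤ #s * exp (-(n * log 2 / #s)) := log_two_le_mul_exp_neg hn hs_card
    _ ≤ #s * exp ((∑ i ∈ s, -(a i * log 2)) / #s) := by
        rw [sum_neg_distrib, ← sum_mul, neg_div]
        gcongr
    _ ≤ ∑ i ∈ s, ((2 : ℝ) ^ a i)⁻¹ := by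
        simp only [hpow]
        exact card_mul_exp_sum_div_card_le_sum_exp hs _

end Estimates

theorem stmt_15 (n : ℕ) (hn : 2 ≤ n) (U : Finset (Finset (Fin n)))
    (hUp : ∀ A ∈ U, ∀ B : Finset (Fin n), A ⊆ B → B ∈ U)
    (hcard : U.card ≤ 2 ^ (n - 1))
    (t : ℕ) (ht : (t : ℝ) ≥ (1 + Real.exp (-1)) * n / Real.logb 2 n)
    (A : Fin t → Finset (Fin n)) (hA : ∀ i, A i ∈ U) :
    ∃ i j : Fin t, i < j ∧ (A i ∩ A j).Nonempty := by
  by_contra! hcon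
  have hdisj : ((univ : Finset (Fin t)) : Set (Fin t)).PairwiseDisjoint A :=
    ((pairwise_disjoint_on A).2 fun i j h =>
      disjoint_iff_inter_eq_empty.2 (hcon i j h)).set_pairwise _
  have hn1 : (1 : ℝ) < n := by exact_mod_cast hn
  have : Nonempty (Fin t) := Fin.pos_iff_nonempty.1 <| by
    have := logb_pos one_lt_two hn1
    exact_mod_cast (show (0 : ℝ) < t from lt_of_lt_of_le (by positivity) ht)
  have : NeZero n := ⟨by omega⟩
  have hhalf := one_half_le_prod_one_sub_inv_two_pow_card (U := U)
    (fun B C hBC hB => hUp B hB C hBC) (by simpa using hcard) (fun i _ => hA i) hdisj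
  have hsmall : ∀ i ∈ univ, ((2 : ℝ) ^ #(A i))⁻¹ ∈ Set.Ioo 0 1 := by
    intro i _
    have hAi : #(A i) ≠ 0 := fun h => by
      have := prod_eq_zero (f := fun j => 1 - ((2 : ℝ) ^ #(A j))⁻¹) (mem_univ i) (by simp [h])
      linarith
    exact ⟨by positivity, inv_lt_one_of_one_lt₀ (one_lt_pow₀ one_lt_two hAi)⟩
  have hsum : ∑ i, (#(A i) : ℝ) ≤ n := by
    rw [← Nat.cast_sum, ← card_biUnion hdisj]
    exact_mod_cast (card_le_univ _).trans_eq (Fintype.card_fin n)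
  have hlog := log_two_le_sum_inv_two_pow univ_nonempty (fun i => #(A i)) hn1 hsum
    (by simpa using ht)
  have hlt := prod_one_sub_lt_exp_neg_sum univ_nonempty hsmall
  have : exp (-∑ i, ((2 : ℝ) ^ #(A i))⁻¹) ≤ 1 / 2 := by
    calc _ ≤ exp (-log 2) := exp_le_exp.2 (neg_le_neg hlog)
      _ = 1 / 2 := by rw [exp_neg, exp_log two_pos, one_div]
  linarith
end

section
/- Let E ⊆ P([n]) be an intersecting family with |E| = m ≥ 1. Then there exists x ∈ [n] such that the number of sets in E containing x is at least 1/2 + sqrt(1/4 + (m² − m)/n). -/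
theorem stmt_18 (n : ℕ) (E : Finset (Finset (Fin n)))
    (hInt : ∀ A ∈ E, ∀ B ∈ E, (A ∩ B).Nonempty)
    (m : ℕ) (hm : E.card = m) (hm1 : 1 ≤ m) :
    ∃ x : Fin n, ((E.filter (fun S => x ∈ S)).card : ℝ)
      ≥ 1 / 2 + Real.sqrt (1 / 4 + ((m : ℝ) ^ 2 - m) / n) := by
  classical
  obtain ⟨A, hA⟩ : E.Nonempty := Finset.card_pos.mp (by omega)
  obtain ⟨a, ha⟩ := hInt A hA A hA
  rw [Finset.mem_inter] at ha
  have hn : 0 < n := a.pos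
  set d : Fin n → ℕ := fun x => (E.filter (fun S => x ∈ S)).card with hd
  haveI : Nonempty (Fin n) := ⟨a⟩
  obtain ⟨x₀, hx₀⟩ := Finite.exists_max d
  -- degree of x₀ is at least 1
  have hD1 : 1 ≤ d x₀ := by
    refine le_trans ?_ (hx₀ a)
    have : A ∈ E.filter (fun S => a ∈ S) := Finset.mem_filter.mpr ⟨hA, ha.1⟩
    exact Finset.card_pos.mpr ⟨A, this⟩
  -- choice of common element
  set g : Finset (Fin n) × Finset (Fin n) → Fin n :=
    fun p => if h : (p.1 ∩ p.2).Nonempty then (p.1 ∩ p.2).min' h else a with hg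
  have key : E.offDiag.card ≤ ∑ x : Fin n, (E.filter (fun S => x ∈ S)).offDiag.card := by
    rw [Finset.card_eq_sum_card_fiberwise (f := g) (t := Finset.univ)
      (fun p _ => Finset.mem_univ _)]
    apply Finset.sum_le_sum
    intro x _
    apply Finset.card_le_card
    intro p hp
    rw [Finset.mem_filter] at hp
    obtain ⟨hpE, hgx⟩ := hp
    rw [Finset.mem_offDiag] at hpE
    have hne : (p.1 ∩ p.2).Nonempty := hInt _ hpE.1 _ hpE.2.1
    have hmin := (p.1 ∩ p.2).min'_mem hne
    rw [Finset.mem_inter] at hmin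
    rw [hg] at hgx
    simp only [dif_pos hne] at hgx
    rw [Finset.mem_offDiag]
    exact ⟨Finset.mem_filter.mpr ⟨hpE.1, hgx ▸ hmin.1⟩,
      Finset.mem_filter.mpr ⟨hpE.2.1, hgx ▸ hmin.2⟩, hpE.2.2⟩
  -- cast to reals
  have hsq : ∀ k : ℕ, k ≤ k * k := by
    intro k
    rcases Nat.eq_zero_or_pos k with h | h
    · simp [h]
    · calc k = k * 1 := (mul_one k).symm
        _ ≤ k * k := Nat.mul_le_mul_left k h
  have hcast : ∀ x : Fin n, ((E.filter (fun S => x ∈ S)).offDiag.card : ℝ)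
      = (d x : ℝ) ^ 2 - d x := by
    intro x
    rw [Finset.offDiag_card]
    rw [Nat.cast_sub (hsq _)]
    push_cast
    ring
  have keyR : (m : ℝ) ^ 2 - m ≤ (n : ℝ) * ((d x₀ : ℝ) ^ 2 - d x₀) := by
    have h1 : ((E.offDiag.card : ℕ) : ℝ) = (m : ℝ) ^ 2 - m := by
      rw [Finset.offDiag_card, hm, Nat.cast_sub (hsq _)]
      push_cast; ring
    have h2 : (E.offDiag.card : ℝ) ≤ ∑ x : Fin n, ((E.filter (fun S => x ∈ S)).offDiag.card : ℝ) := by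
      exact_mod_cast key
    rw [h1] at h2
    refine h2.trans ?_
    have h3 : ∀ x : Fin n, ((E.filter (fun S => x ∈ S)).offDiag.card : ℝ)
        ≤ (d x₀ : ℝ) ^ 2 - d x₀ := by
      intro x
      rw [hcast x]
      have hxle : (d x : ℝ) ≤ d x₀ := by exact_mod_cast hx₀ x
      have hx0 : (0 : ℝ) ≤ d x := by positivity
      have hD1' : (1 : ℝ) ≤ d x₀ := by exact_mod_cast hD1
      nlinarith [mul_nonneg (sub_nonneg.mpr hxle) (by linarith : (0:ℝ) ≤ (d x₀ : ℝ) + d x - 1)]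
    calc ∑ x : Fin n, ((E.filter (fun S => x ∈ S)).offDiag.card : ℝ)
        ≤ ∑ _x : Fin n, ((d x₀ : ℝ) ^ 2 - d x₀) := Finset.sum_le_sum (fun x _ => h3 x)
      _ = (n : ℝ) * ((d x₀ : ℝ) ^ 2 - d x₀) := by
          rw [Finset.sum_const, Finset.card_univ, Fintype.card_fin, nsmul_eq_mul]
  refine ⟨x₀, ?_⟩
  have hnR : (0 : ℝ) < n := by exact_mod_cast hn
  have hdiv : ((m : ℝ) ^ 2 - m) / n ≤ (d x₀ : ℝ) ^ 2 - d x₀ := by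
    rw [div_le_iff₀ hnR]
    linarith [keyR]
  have hD1' : (1 : ℝ) ≤ d x₀ := by exact_mod_cast hD1
  have hsqle : (1 : ℝ) / 4 + ((m : ℝ) ^ 2 - m) / n ≤ ((d x₀ : ℝ) - 1 / 2) ^ 2 := by
    nlinarith [hdiv]
  have h := Real.sqrt_le_sqrt hsqle
  rw [Real.sqrt_sq (by linarith : (0 : ℝ) ≤ (d x₀ : ℝ) - 1 / 2)] at h
  show ((E.filter (fun S => x₀ ∈ S)).card : ℝ) ≥ _
  have : ((E.filter (fun S => x₀ ∈ S)).card : ℝ) = (d x₀ : ℝ) := by rw [hd]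
  linarith [this ▸ h]
end

section
/- Let E ⊆ P([n]) be an intersecting family with |E| = m ≥ 1. Then there exists x ∈ [n] contained in at least sqrt((m−1)/(mn)) · m sets of E. -/
theorem stmt_19 (n : ℕ) (E : Finset (Finset (Fin n)))
    (hInt : ∀ A ∈ E, ∀ B ∈ E, (A ∩ B).Nonempty)
    (m : ℕ) (hm : E.card = m) (hm1 : 1 ≤ m) :
    ∃ x : Fin n, ((E.filter (fun S => x ∈ S)).card : ℝ)
      ≥ Real.sqrt (((m : ℝ) - 1) / (m * n)) * m := by
  classical
  rcases Nat.eq_zero_or_pos n with hn | hn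
  · exfalso
    obtain ⟨A, hA⟩ := Finset.card_pos.mp (by omega : 0 < E.card)
    obtain ⟨x, -⟩ := hInt A hA A hA
    exact absurd x.isLt (by omega)
  have : NeZero n := ⟨hn.ne'⟩
  set d : Fin n → ℕ := fun x => (E.filter (fun S => x ∈ S)).card with hd
  obtain ⟨x₀, -, hx₀⟩ := Finset.exists_max_image Finset.univ d Finset.univ_nonempty
  have key : m ^ 2 ≤ n * (d x₀) ^ 2 := by
    have h1 : m ^ 2 ≤ ∑ A ∈ E, ∑ B ∈ E, (A ∩ B).card := by
      calc m ^ 2 = ∑ A ∈ E, ∑ B ∈ E, 1 := by simp [hm, sq]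
        _ ≤ _ := Finset.sum_le_sum fun A hA => Finset.sum_le_sum fun B hB =>
              Finset.card_pos.mpr (hInt A hA B hB)
    have hcard : ∀ A B : Finset (Fin n), (A ∩ B).card =
        ∑ x : Fin n, (if x ∈ A then 1 else 0) * (if x ∈ B then 1 else 0) := by
      intro A B
      have : A ∩ B = Finset.univ.filter (fun x => x ∈ A ∧ x ∈ B) := by
        ext x; simp
      rw [this, Finset.card_filter]
      apply Finset.sum_congr rfl
      intro x _
      by_cases h1 : x ∈ A <;> by_cases h2 : x ∈ B <;> simp [h1, h2]
    have hdx : ∀ x, d x = ∑ A ∈ E, if x ∈ A then 1 else 0 := fun x =>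
      Finset.card_filter (fun S => x ∈ S) E
    have h2 : ∑ A ∈ E, ∑ B ∈ E, (A ∩ B).card = ∑ x : Fin n, (d x) ^ 2 := by
      calc ∑ A ∈ E, ∑ B ∈ E, (A ∩ B).card
          = ∑ A ∈ E, ∑ B ∈ E, ∑ x : Fin n,
              (if x ∈ A then 1 else 0) * (if x ∈ B then 1 else 0) :=
            Finset.sum_congr rfl fun A _ => Finset.sum_congr rfl fun B _ => hcard A B
        _ = ∑ A ∈ E, ∑ x : Fin n, ∑ B ∈ E,
              (if x ∈ A then 1 else 0) * (if x ∈ B then 1 else 0) :=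
            Finset.sum_congr rfl fun A _ => Finset.sum_comm
        _ = ∑ x : Fin n, ∑ A ∈ E, ∑ B ∈ E,
              (if x ∈ A then 1 else 0) * (if x ∈ B then 1 else 0) :=
            Finset.sum_comm
        _ = ∑ x : Fin n, (d x) ^ 2 := by
            apply Finset.sum_congr rfl
            intro x _
            rw [sq, hdx, Finset.sum_mul_sum]
    have h3 : ∑ x : Fin n, (d x) ^ 2 ≤ n * (d x₀) ^ 2 := by
      calc ∑ x : Fin n, (d x) ^ 2 ≤ ∑ _x : Fin n, (d x₀) ^ 2 :=
            Finset.sum_le_sum fun x _ => Nat.pow_le_pow_left (hx₀ x (Finset.mem_univ x)) 2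
        _ = n * (d x₀) ^ 2 := by simp [Finset.sum_const, Finset.card_univ, mul_comm]
    omega
  refine ⟨x₀, ?_⟩
  have hd0 : (0 : ℝ) ≤ (d x₀ : ℝ) := Nat.cast_nonneg _
  have hm' : (0 : ℝ) < m := by exact_mod_cast hm1
  have hn' : (0 : ℝ) < n := by exact_mod_cast hn
  have hkey : ((m : ℝ)) ^ 2 ≤ (n : ℝ) * ((d x₀ : ℝ)) ^ 2 := by exact_mod_cast key
  have hm1' : (1 : ℝ) ≤ (m : ℝ) := by exact_mod_cast hm1
  have ht : (0 : ℝ) ≤ ((m : ℝ) - 1) / (m * n) := by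
    apply div_nonneg (by linarith) (by positivity)
  show ((E.filter (fun S => x₀ ∈ S)).card : ℝ) ≥ _
  have : ((E.filter (fun S => x₀ ∈ S)).card : ℝ) = (d x₀ : ℝ) := by simp [hd]
  rw [this, ge_iff_le, ← Real.sqrt_sq hd0]
  have heq : Real.sqrt (((m : ℝ) - 1) / (m * n)) * m
      = Real.sqrt ((((m : ℝ) - 1) / (m * n)) * m ^ 2) := by
    rw [Real.sqrt_mul ht, Real.sqrt_sq hm'.le]
  rw [heq]
  apply Real.sqrt_le_sqrt
  have : (((m : ℝ) - 1) / (m * n)) * m ^ 2 = ((m : ℝ) - 1) * m / n := by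
    field_simp
  rw [this, div_le_iff₀ hn']
  nlinarith [hkey]
end
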